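/- arXiv:2108.07066 — 2 statements merged into one kernel-verified Lean document; each statement's English description precedes it below -/
import Mathlib

section
/- Let s ≥ 1 be an integer, let G be an H_s-free graph with clique number ω satisfying ω³ > ω + s/7, and let 𝓛 = (L_0, L_1, …, L_k) be an optimal s-template in G. Let m ≥ (s+1)ω^s, and let I, J ⊆ {1,…,k} be m-large with I ≠ J. Then either: J ⊆ I and every vertex in M_I has fewer than ω^s neighbours in M_J; or I ⊆ J and every vertex in M_J has fewer than ω^s neighbours in M_I; or I ∪ J = {1,…,k} and the sets M_I and M_J are s-crowded. -/
/-!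
Each excluded configuration yields an induced double star `H_s`, built from `s`-element stable
sets, which exist in any `ω^s` vertices by the Erdős–Szekeres bound. If `i ∈ I \ J`, `t ∉ I ∪ J`
and `v ∈ M_I` had `ω^s` neighbours in `M_J`, then `v`, a neighbour `c ∈ L_i` of `v`, `s`
independent neighbours of `v` in `M_J` and `s` independent neighbours of `c` in `L_t` would span
an `H_s`. If `i ∈ I \ J` and `j ∈ J \ I`, a stable set meeting `M_I` and `M_J` in `s` vertices
each is completed to an `H_s` by an edge `ab` with `a ∈ L_i` complete to its `M_I`-part and
`b ∈ L_j` complete to its `M_J`-part; these exist because pure vertices miss few vertices of the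
sets `L_i` they see. In the incomparable case an index outside `I ∪ J` would thus leave every
vertex of `M_I` with fewer than `ω^s` neighbours in `M_J`, and a greedy choice then gives a
stable set contradicting crowdedness.
-/

open SimpleGraph Set

/-- `G` contains no induced subgraph isomorphic to `H`. -/
def IsInducedFree {V : Type*} {W : Type*} (G : SimpleGraph V) (H : SimpleGraph W) : Prop :=
  ∀ s : Set V, ¬ Nonempty ((G.induce s) ≃g H)

/-- The double star `H_s`: two adjacent internal vertices `0` and `1`; `0` is adjacent to the
`s` leaves `2,…,s+1` and `1` is adjacent to the `s` leaves `s+2,…,2s+1`. -/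
def doubleStarGraph (s : ℕ) : SimpleGraph (Fin (2*s+2)) :=
  SimpleGraph.fromRel (fun a b =>
    ((a : ℕ) = 0 ∧ (b : ℕ) = 1) ∨
    ((a : ℕ) = 0 ∧ 2 ≤ (b : ℕ) ∧ (b : ℕ) ≤ s+1) ∨
    ((a : ℕ) = 1 ∧ s+2 ≤ (b : ℕ)))

/-- A graph has degeneracy at most `d` if every nonempty subgraph has a vertex whose degree
in that subgraph is at most `d`. -/
def DegeneracyAtMost {V : Type*} (G : SimpleGraph V) (d : ℕ) : Prop :=
  ∀ H : G.Subgraph, H.verts.Nonempty → ∃ v ∈ H.verts, (H.neighborSet v).ncard ≤ d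

/-- A `(k,d)`-colouring: a partition of the vertex set into `k` parts, each inducing a
subgraph of degeneracy at most `d`. -/
def KDColorable {V : Type*} (G : SimpleGraph V) (k d : ℕ) : Prop :=
  ∃ f : V → Fin k, ∀ i : Fin k, DegeneracyAtMost (G.induce {v | f v = i}) d

/-- `G` contains the complete bipartite graph `K_{t,t}` as a (not necessarily induced)
subgraph. -/
def ContainsKtt {V : Type*} (G : SimpleGraph V) (t : ℕ) : Prop :=
  ∃ A B : Finset V, A.card = t ∧ B.card = t ∧ Disjoint A B ∧
    ∀ a ∈ A, ∀ b ∈ B, G.Adj a b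

/-- A set of vertices is stable (independent) if no two of its members are adjacent. -/
def IsStableSet {V : Type*} (G : SimpleGraph V) (S : Set V) : Prop :=
  ∀ a ∈ S, ∀ b ∈ S, a ≠ b → ¬ G.Adj a b

/-- An `s`-template in `G`: a clique `L0` complete to all the `L i`, pairwise disjoint sets
`L 1, …, L k` (here indexed by `Fin k`) whose sizes lie between `ω^{s+5}` and `14 ω^{s+6}`,
such that each vertex of `L i` has at most `ω^{s+3}` non-neighbours in each other `L j`. -/
def IsTemplate {V : Type*} (G : SimpleGraph V) (s : ℕ) (L0 : Set V) {k : ℕ}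
    (L : Fin k → Set V) : Prop :=
  (∀ i : Fin k, Disjoint L0 (L i)) ∧
  (Pairwise fun i j : Fin k => Disjoint (L i) (L j)) ∧
  G.IsClique L0 ∧
  (∀ u ∈ L0, ∀ i : Fin k, ∀ v ∈ L i, G.Adj u v) ∧
  (∀ i : Fin k, G.cliqueNum ^ (s+5) ≤ (L i).ncard ∧ (L i).ncard ≤ 14 * G.cliqueNum ^ (s+6)) ∧
  (∀ i j : Fin k, i ≠ j → ∀ v ∈ L i,
    ({u ∈ L j | ¬ G.Adj v u}).ncard ≤ G.cliqueNum ^ (s+3))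

/-- The value of an `s`-template. -/
noncomputable def templateValue {V : Type*} (G : SimpleGraph V) (s : ℕ) (L0 : Set V) {k : ℕ}
    (L : Fin k → Set V) : ℕ :=
  (⋃ i, L i).ncard + 7 * G.cliqueNum ^ (s+5) * L0.ncard + k * G.cliqueNum ^ (s+5)

/-- An optimal `s`-template: one of maximum value among all `s`-templates in `G`. -/
def IsOptimalTemplate {V : Type*} (G : SimpleGraph V) (s : ℕ) (L0 : Set V) {k : ℕ}
    (L : Fin k → Set V) : Prop :=
  IsTemplate G s L0 L ∧
  ∀ (k' : ℕ) (L0' : Set V) (L' : Fin k' → Set V), IsTemplate G s L0' L' →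
    templateValue G s L0' L' ≤ templateValue G s L0 L

/-- `V(𝓛)`, the vertex set of a template. -/
def templateVerts {V : Type*} (L0 : Set V) {k : ℕ} (L : Fin k → Set V) : Set V :=
  L0 ∪ ⋃ i, L i

/-- `N(𝓛)`: the vertices outside `V(𝓛)` with a neighbour in `L 1 ∪ ⋯ ∪ L k`. -/
def templateNbhd {V : Type*} (G : SimpleGraph V) (L0 : Set V) {k : ℕ}
    (L : Fin k → Set V) : Set V :=
  {v | v ∉ templateVerts L0 L ∧ ∃ i : Fin k, ∃ u ∈ L i, G.Adj v u}


/-- A vertex `v` is pendant with respect to the template: there are distinct `i, j`, a vertex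
`u ∈ L j` and a stable set `S ⊆ L i` of `s+1` common neighbours of `u` such that `v` is not
adjacent to `u` and `v` has exactly one neighbour in `S`. -/
def TemplatePendant {V : Type*} (G : SimpleGraph V) (s : ℕ) {k : ℕ}
    (L : Fin k → Set V) (v : V) : Prop :=
  ∃ i j : Fin k, i ≠ j ∧ ∃ u ∈ L j, ∃ S : Set V, S ⊆ L i ∧ S.ncard = s + 1 ∧
    IsStableSet G S ∧ (∀ w ∈ S, G.Adj u w) ∧ ¬ G.Adj v u ∧ ({w ∈ S | G.Adj v w}).ncard = 1

/-- A vertex `v` is dense with respect to the template: there are `j` and `u ∈ L j` such that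
for all `i ≠ j`, fewer than `ω^{s+2}/14` vertices of `L i` are adjacent to `u` and not to `v`. -/
def TemplateDense {V : Type*} (G : SimpleGraph V) (s : ℕ) {k : ℕ}
    (L : Fin k → Set V) (v : V) : Prop :=
  ∃ j : Fin k, ∃ u ∈ L j, ∀ i : Fin k, i ≠ j →
    14 * ({w ∈ L i | G.Adj u w ∧ ¬ G.Adj v w}).ncard < G.cliqueNum ^ (s+2)

/-- A vertex `v` is pure with respect to the template: it has no neighbour in at least two of
the sets `L i`, and for each `i`, either it has no neighbour in `L i` or it has at most
`ω^{s+2}/7` non-neighbours in `L i`. -/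
def TemplatePure {V : Type*} (G : SimpleGraph V) (s : ℕ) {k : ℕ}
    (L : Fin k → Set V) (v : V) : Prop :=
  (∃ i₁ i₂ : Fin k, i₁ ≠ i₂ ∧ (∀ w ∈ L i₁, ¬ G.Adj v w) ∧ (∀ w ∈ L i₂, ¬ G.Adj v w)) ∧
  (∀ i : Fin k, (∀ w ∈ L i, ¬ G.Adj v w) ∨
    7 * ({w ∈ L i | ¬ G.Adj v w}).ncard ≤ G.cliqueNum ^ (s+2))

/-- `M_I`: the pure vertices `v` (with respect to the template) whose set `I_v` of indices `i`
such that `v` has a neighbour in `L i` equals `I`. -/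
def templatePart {V : Type*} (G : SimpleGraph V) (s : ℕ) (L0 : Set V) {k : ℕ}
    (L : Fin k → Set V) (I : Set (Fin k)) : Set V :=
  {v | v ∈ templateNbhd G L0 L ∧ TemplatePure G s L v ∧
    ∀ i : Fin k, (∃ u ∈ L i, G.Adj v u) ↔ i ∈ I}

/-- Two disjoint sets `A, B` are `s`-crowded if there is no stable set meeting each of them
in exactly `s` vertices. -/
def SCrowded {V : Type*} (G : SimpleGraph V) (s : ℕ) (A B : Set V) : Prop :=
  ¬ ∃ X : Set V, IsStableSet G X ∧ (X ∩ A).ncard = s ∧ (X ∩ B).ncard = s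

/-- `c` satisfies the Kővári–Sós–Turán-type bound for `H_s`: every `H_s`-free graph either
contains `K_{t,t}` as a subgraph or has degeneracy less than `t^c`. -/
def KSTBound (s c : ℕ) : Prop :=
  ∀ (W : Type) [Fintype W], ∀ G' : SimpleGraph W, IsInducedFree G' (doubleStarGraph s) →
    ∀ t : ℕ, ContainsKtt G' t ∨ ∃ D : ℕ, D < t ^ c ∧ DegeneracyAtMost G' D

/-- `Z(𝓛)`: the union of `L0` with the set of vertices of `N(𝓛)` having at most `ω^{s+2}/4`
non-neighbours in each `L i`. -/
def templateZ {V : Type*} (G : SimpleGraph V) (s : ℕ) (L0 : Set V) {k : ℕ}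
    (L : Fin k → Set V) : Set V :=
  L0 ∪ {v ∈ templateNbhd G L0 L |
    ∀ i : Fin k, 4 * ({u ∈ L i | ¬ G.Adj v u}).ncard ≤ G.cliqueNum ^ (s+2)}

/-- `Y(𝓛) = (V(𝓛) ∪ N(𝓛)) \ Z(𝓛)`. -/
def templateY {V : Type*} (G : SimpleGraph V) (s : ℕ) (L0 : Set V) {k : ℕ}
    (L : Fin k → Set V) : Set V :=
  (templateVerts L0 L ∪ templateNbhd G L0 L) \ templateZ G s L0 L

/-- `N_A(𝓛)`: the vertices of `A \ V(𝓛)` with a neighbour in `L 1 ∪ ⋯ ∪ L k`. -/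
def templateNbhdIn {V : Type*} (G : SimpleGraph V) (A : Set V) (L0 : Set V) {k : ℕ}
    (L : Fin k → Set V) : Set V :=
  {v ∈ A | v ∉ templateVerts L0 L ∧ ∃ i : Fin k, ∃ u ∈ L i, G.Adj v u}

/-- `Z_A(𝓛)`: the union of `L0` with the set of vertices of `A \ V(𝓛)` having at most
`ω^{s+2}/4` non-neighbours in each `L i`. -/
def templateZIn {V : Type*} (G : SimpleGraph V) (s : ℕ) (A : Set V) (L0 : Set V) {k : ℕ}
    (L : Fin k → Set V) : Set V :=
  L0 ∪ {v ∈ A | v ∉ templateVerts L0 L ∧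
    ∀ i : Fin k, 4 * ({u ∈ L i | ¬ G.Adj v u}).ncard ≤ G.cliqueNum ^ (s+2)}

/-- `Y_A(𝓛) = (V(𝓛) ∪ N_A(𝓛)) \ Z_A(𝓛)`. -/
def templateYIn {V : Type*} (G : SimpleGraph V) (s : ℕ) (A : Set V) (L0 : Set V) {k : ℕ}
    (L : Fin k → Set V) : Set V :=
  (templateVerts L0 L ∪ templateNbhdIn G A L0 L) \ templateZIn G s A L0 L

open Finset

theorem Nat.add_choose_le_pow {a : ℕ} (ha : 2 ≤ a) : ∀ s, (a + s).choose s ≤ a ^ (s + 1)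
  | 0 => by simp; omega
  | 1 => by simp; nlinarith
  | s + 2 => by
    have ih := Nat.add_choose_le_pow ha (s + 1)
    have hrec := Nat.add_one_mul_choose_eq (a + (s + 1)) (s + 1)
    have hgrow : a + s + 2 ≤ (s + 2) * a := by nlinarith
    refine Nat.le_of_mul_le_mul_right (c := s + 2) ?_ (by omega)
    calc (a + (s + 2)).choose (s + 2) * (s + 2)
        = (a + s + 2) * (a + (s + 1)).choose (s + 1) := by
          rw [show a + (s + 2) = a + (s + 1) + 1 by ring, ← hrec]; ring
      _ ≤ (s + 2) * a * a ^ (s + 2) := Nat.mul_le_mul hgrow ih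
      _ = a ^ (s + 2 + 1) * (s + 2) := by ring

theorem ncard_le_ncard_sdiff_biUnion_add_sum {α ι : Type*} [Finite α] (P : Set α)
    (A : Finset ι) (B : ι → Set α) :
    P.ncard ≤ (P \ ⋃ i ∈ A, B i).ncard + ∑ i ∈ A, (B i).ncard :=
  (Set.ncard_le_ncard_sdiff_add_ncard _ _).trans (Nat.add_le_add_left (A.set_ncard_biUnion_le B) _)

theorem exists_mem_forall_notMem_of_sum_ncard_lt {α ι : Type*} [Finite α] {P : Set α}
    {A : Finset ι} {B : ι → Set α} (h : ∑ i ∈ A, (B i).ncard < P.ncard) :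
    ∃ p ∈ P, ∀ i ∈ A, p ∉ B i := by
  have := ncard_le_ncard_sdiff_biUnion_add_sum P A B
  obtain ⟨p, hpP, hp⟩ := Set.nonempty_of_ncard_ne_zero (s := P \ ⋃ i ∈ A, B i) (by omega)
  exact ⟨p, hpP, fun i hi hpi => hp (Set.mem_biUnion hi hpi)⟩

namespace SimpleGraph

variable {V : Type*} {G : SimpleGraph V}

theorem IsIndepSet.union {A B : Set V} (hA : G.IsIndepSet A) (hB : G.IsIndepSet B)
    (hAB : ∀ a ∈ A, ∀ b ∈ B, ¬ G.Adj a b) : G.IsIndepSet (A ∪ B) :=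
  Set.pairwise_union.2 ⟨hA, hB, fun a ha b hb _ => ⟨hAB a ha b hb, fun h => hAB a ha b hb h.symm⟩⟩

/-- The Erdős–Szekeres bound `R(a + 1, s + 1) ≤ C(a + s, s)`. -/
theorem exists_isIndepSet_of_add_choose_le :
    ∀ (a s : ℕ) (A : Finset V), (∀ t ⊆ A, G.IsClique (t : Set V) → #t ≤ a) →
      (a + s).choose s ≤ #A → ∃ t ⊆ A, G.IsIndepSet (t : Set V) ∧ #t = s + 1
  | _, 0, A, _, hA => by
    obtain ⟨v, hv⟩ := card_pos.1 (by simpa using hA)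
    exact ⟨{v}, by simpa using hv, by simp, rfl⟩
  | 0, s + 1, A, hcl, hA => by
    obtain ⟨v, hv⟩ := card_pos.1 (by simpa using hA)
    simpa using hcl {v} (by simpa using hv) (by simp)
  | a + 1, s + 1, A, hcl, hA => by
    classical
    obtain ⟨v, hv⟩ := card_pos.1 ((Nat.choose_pos (by omega)).trans_le hA)
    set N := (A.erase v).filter (G.Adj v)
    set M := (A.erase v).filter (fun u => ¬ G.Adj v u)
    have hNA : N ⊆ A := (filter_subset _ _).trans (erase_subset _ _)
    have hMA : M ⊆ A := (filter_subset _ _).trans (erase_subset _ _)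
    have hNM : #N + #M + 1 = #A := by
      rw [card_filter_add_card_filter_not, card_erase_add_one hv]
    have hpascal : (a + 1 + (s + 1)).choose (s + 1) =
        (a + (s + 1)).choose (s + 1) + (a + 1 + s).choose s := by
      rw [show a + 1 + (s + 1) = a + (s + 1) + 1 by ring, Nat.choose_succ_succ', add_comm]
      ring_nf
    by_cases hN : (a + (s + 1)).choose (s + 1) ≤ #N
    · have hclN : ∀ t ⊆ N, G.IsClique (t : Set V) → #t ≤ a := by
        intro t ht htc
        have hvt : v ∉ t := fun h => by simpa [N] using ht h
        have := hcl (insert v t) (insert_subset hv (ht.trans hNA))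
          (by rw [coe_insert]; exact htc.insert fun b hb _ => (mem_filter.1 (ht hb)).2)
        rw [card_insert_of_notMem hvt] at this
        omega
      obtain ⟨t, htN, ht, hcard⟩ := exists_isIndepSet_of_add_choose_le a (s + 1) N hclN hN
      exact ⟨t, htN.trans hNA, ht, hcard⟩
    · obtain ⟨t, htM, ht, hcard⟩ := exists_isIndepSet_of_add_choose_le (a + 1) s M
        (fun t ht => hcl t (ht.trans hMA)) (by omega)
      have hvt : v ∉ t := fun h => by simpa [M] using htM h
      refine ⟨insert v t, insert_subset hv (htM.trans hMA), ?_,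
        by rw [card_insert_of_notMem hvt, hcard]⟩
      rw [coe_insert, isIndepSet_iff, Set.pairwise_insert_of_notMem (by simpa using hvt)]
      refine ⟨ht, fun b hb => ?_⟩
      have hvb := (mem_filter.1 (htM hb)).2
      exact ⟨hvb, fun h => hvb h.symm⟩

theorem exists_isIndepSet_of_cliqueNum_pow_le [Fintype V] (hω : 2 ≤ G.cliqueNum) {A : Set V} :
    ∀ {s : ℕ}, G.cliqueNum ^ s ≤ A.ncard →
      ∃ t : Finset V, ↑t ⊆ A ∧ G.IsIndepSet (t : Set V) ∧ #t = s
  | 0, _ => ⟨∅, by simp, by simp, rfl⟩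
  | s + 1, hA => by
    classical
    obtain ⟨t, htA, ht, hcard⟩ := exists_isIndepSet_of_add_choose_le G.cliqueNum s A.toFinset
      (fun t _ htc => htc.card_le_cliqueNum)
      ((Nat.add_choose_le_pow hω s).trans (by rwa [Set.ncard_eq_toFinset_card'] at hA))
    exact ⟨t, by simpa using coe_subset.2 htA, ht, hcard⟩

end SimpleGraph

theorem isStableSet_iff_isIndepSet {V : Type*} {G : SimpleGraph V} {S : Set V} :
    IsStableSet G S ↔ G.IsIndepSet S :=
  Iff.rfl

theorem IsInducedFree.not_isIndContained {V W : Type*} {G : SimpleGraph V} {H : SimpleGraph W}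
    (h : IsInducedFree G H) : ¬ H ⊴ G := fun hc =>
  let ⟨S, ⟨e⟩⟩ := isIndContained_iff_exists_iso_induce.1 hc
  h S ⟨e.symm⟩

namespace doubleStarGraph

variable {s : ℕ}

def leafL (i : Fin s) : Fin (2 * s + 2) :=
  (Fin.cast (two_mul s).symm (Fin.castAdd s i)).succ.succ

def leafR (i : Fin s) : Fin (2 * s + 2) :=
  (Fin.cast (two_mul s).symm (Fin.natAdd s i)).succ.succ

@[simp] theorem val_leafL (i : Fin s) : (leafL i : ℕ) = i + 2 := by simp [leafL]

@[simp] theorem val_leafR (i : Fin s) : (leafR i : ℕ) = s + i + 2 := by simp [leafR]; omega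

theorem adj_iff {m n : Fin (2 * s + 2)} : (doubleStarGraph s).Adj m n ↔ (m : ℕ) ≠ n ∧
    (((m : ℕ) = 0 ∧ (n : ℕ) = 1) ∨ ((m : ℕ) = 0 ∧ 2 ≤ (n : ℕ) ∧ (n : ℕ) ≤ s + 1) ∨
      ((m : ℕ) = 1 ∧ s + 2 ≤ (n : ℕ)) ∨ ((n : ℕ) = 0 ∧ (m : ℕ) = 1) ∨
      ((n : ℕ) = 0 ∧ 2 ≤ (m : ℕ) ∧ (m : ℕ) ≤ s + 1) ∨ ((n : ℕ) = 1 ∧ s + 2 ≤ (m : ℕ))) := by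
  simp only [doubleStarGraph, fromRel_adj, ne_eq, Fin.ext_iff]
  tauto

theorem eq_zero_or_eq_one_or_leaf (n : Fin (2 * s + 2)) :
    n = 0 ∨ n = 1 ∨ (∃ i, n = leafL i) ∨ ∃ i, n = leafR i := by
  induction n using Fin.cases with
  | zero => simp
  | succ n =>
    induction n using Fin.cases with
    | zero => simp
    | succ n =>
      obtain ⟨n, rfl⟩ : ∃ n', n = Fin.cast (two_mul s).symm n' :=
        ⟨Fin.cast (two_mul s) n, by simp⟩
      induction n using Fin.addCases with
      | left i => exact .inr <| .inr <| .inl ⟨i, rfl⟩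
      | right i => exact .inr <| .inr <| .inr ⟨i, rfl⟩

end doubleStarGraph

section DoubleStar

open doubleStarGraph

variable {V : Type*} {G : SimpleGraph V} {s : ℕ}

theorem doubleStarGraph_isIndContained {x y : V} {ex ey : Fin s → V}
    (hex : ex.Injective) (hey : ey.Injective) (hxy : G.Adj x y)
    (hx : ∀ i, G.Adj x (ex i)) (hy : ∀ i, G.Adj y (ey i))
    (hxey : ∀ i, ¬ G.Adj x (ey i)) (hyex : ∀ i, ¬ G.Adj y (ex i))
    (hxne : ∀ i, x ≠ ey i) (hyne : ∀ i, y ≠ ex i)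
    (hexex : ∀ i j, ¬ G.Adj (ex i) (ex j)) (heyey : ∀ i j, ¬ G.Adj (ey i) (ey j))
    (hexey : ∀ i j, ¬ G.Adj (ex i) (ey j)) :
    doubleStarGraph s ⊴ G := by
  let f : Fin (2 * s + 2) → V :=
    Fin.cons x (Fin.cons y (Fin.append ex ey ∘ Fin.cast (two_mul s)))
  have f0 : f 0 = x := rfl
  have f1 : f 1 = y := rfl
  have fL : ∀ i, f (leafL i) = ex i := fun i => by simp [f, leafL]
  have fR : ∀ i, f (leafR i) = ey i := fun i => by
    simp only [f, leafR, Fin.cons_succ, Function.comp_apply, Fin.cast_cast, Fin.cast_eq_self,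
      Fin.append_right]
  have hexey' : ∀ i j, ex i ≠ ey j := fun i j h => hxey j (h ▸ hx i)
  have hinj : f.Injective := by
    intro m n hmn
    rcases eq_zero_or_eq_one_or_leaf m with rfl | rfl | ⟨i, rfl⟩ | ⟨i, rfl⟩ <;>
    rcases eq_zero_or_eq_one_or_leaf n with rfl | rfl | ⟨j, rfl⟩ | ⟨j, rfl⟩ <;>
    simp [f0, f1, fL, fR, hex.eq_iff, hey.eq_iff, hxy.ne, hxy.ne', (hx _).ne, (hx _).ne',
      (hy _).ne, (hy _).ne', hxne, (hxne _).symm, hyne, (hyne _).symm, hexey',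
      (hexey' _ _).symm] at hmn ⊢ <;>
    rw [hmn]
  have hadj : ∀ m n, G.Adj (f m) (f n) ↔ (doubleStarGraph s).Adj m n := by
    intro m n
    rcases eq_zero_or_eq_one_or_leaf m with rfl | rfl | ⟨i, rfl⟩ | ⟨i, rfl⟩ <;>
    rcases eq_zero_or_eq_one_or_leaf n with rfl | rfl | ⟨j, rfl⟩ | ⟨j, rfl⟩ <;>
    simp [adj_iff, f0, f1, fL, fR, hxy, hxy.symm, hx, hy, hxey, hyex, hexex, heyey, hexey,
      G.adj_comm _ x, G.adj_comm _ y, G.adj_comm (ey _) (ex _)]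
  exact ⟨{ toFun := f, inj' := hinj, map_rel_iff' := hadj _ _ }⟩

theorem doubleStarGraph_isIndContained_of_finset {x y : V} {Sx Sy : Finset V}
    (hSx : #Sx = s) (hSy : #Sy = s) (hxy : G.Adj x y)
    (hx : ∀ w ∈ Sx, G.Adj x w) (hy : ∀ w ∈ Sy, G.Adj y w)
    (hxSy : ∀ w ∈ Sy, ¬ G.Adj x w) (hySx : ∀ w ∈ Sx, ¬ G.Adj y w)
    (hxSy' : x ∉ Sy) (hySx' : y ∉ Sx) (hS : G.IsIndepSet (↑Sx ∪ ↑Sy)) :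
    doubleStarGraph s ⊴ G := by
  let ex : Fin s → V := fun i => (Sx.equivFinOfCardEq hSx).symm i
  let ey : Fin s → V := fun i => (Sy.equivFinOfCardEq hSy).symm i
  have hexS : ∀ i, ex i ∈ Sx := fun i => ((Sx.equivFinOfCardEq hSx).symm i).2
  have heyS : ∀ i, ey i ∈ Sy := fun i => ((Sy.equivFinOfCardEq hSy).symm i).2
  have hindep : ∀ u ∈ (↑Sx ∪ ↑Sy : Set V), ∀ w ∈ (↑Sx ∪ ↑Sy : Set V), ¬ G.Adj u w :=
    fun u hu w hw h => hS hu hw h.ne h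
  exact doubleStarGraph_isIndContained
    (Subtype.val_injective.comp (Sx.equivFinOfCardEq hSx).symm.injective)
    (Subtype.val_injective.comp (Sy.equivFinOfCardEq hSy).symm.injective) hxy
    (fun i => hx _ (hexS i)) (fun i => hy _ (heyS i)) (fun i => hxSy _ (heyS i))
    (fun i => hySx _ (hexS i)) (fun i h => hxSy' (h ▸ heyS i)) (fun i h => hySx' (h ▸ hexS i))
    (fun i j => hindep _ (.inl (hexS i)) _ (.inl (hexS j)))
    (fun i j => hindep _ (.inr (heyS i)) _ (.inr (heyS j)))
    (fun i j => hindep _ (.inl (hexS i)) _ (.inr (heyS j)))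

end DoubleStar

section Template

variable {V : Type*} {G : SimpleGraph V} {s : ℕ} {L0 : Set V} {k : ℕ} {L : Fin k → Set V}
  {I J : Set (Fin k)} {v w : V} {i : Fin k}

theorem notMem_templatePart_of_mem (hw : w ∈ L i) : w ∉ templatePart G s L0 L I :=
  fun hw' => hw'.1.1 (Or.inr (Set.mem_iUnion.2 ⟨i, hw⟩))

theorem not_adj_of_mem_templatePart (hv : v ∈ templatePart G s L0 L I) (hi : i ∉ I)
    (hw : w ∈ L i) : ¬ G.Adj v w :=
  fun h => hi ((hv.2.2 i).1 ⟨w, hw, h⟩)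

theorem ncard_nonadj_le_of_mem_templatePart (hv : v ∈ templatePart G s L0 L I) (hi : i ∈ I) :
    7 * {w ∈ L i | ¬ G.Adj v w}.ncard ≤ G.cliqueNum ^ (s + 2) :=
  (hv.2.1.2 i).resolve_left fun h => let ⟨u, hu, hvu⟩ := (hv.2.2 i).2 hi; h u hu hvu

theorem exists_notMem_of_mem_templatePart (hv : v ∈ templatePart G s L0 L I) : ∃ t, t ∉ I :=
  let ⟨t, _, _, ht, _⟩ := hv.2.1.1
  ⟨t, fun h => let ⟨u, hu, hvu⟩ := (hv.2.2 t).2 h; ht u hu hvu⟩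

theorem disjoint_templatePart (hIJ : I ≠ J) :
    Disjoint (templatePart G s L0 L I) (templatePart G s L0 L J) :=
  Set.disjoint_left.2 fun _ hI hJ => hIJ (Set.ext fun i => (hI.2.2 i).symm.trans (hJ.2.2 i))

theorem exists_mem_forall_adj_of_subset_templatePart [Finite V] {A : Finset V}
    (hA : ∀ x ∈ A, x ∈ templatePart G s L0 L I) (hi : i ∈ I) {E : Set V}
    (hroom : 7 * E.ncard + #A * G.cliqueNum ^ (s + 2) < 7 * (L i).ncard) :
    ∃ y ∈ L i, y ∉ E ∧ ∀ x ∈ A, G.Adj x y := by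
  have hsum : 7 * ∑ x ∈ A, {w ∈ L i | ¬ G.Adj x w}.ncard ≤ #A * G.cliqueNum ^ (s + 2) := by
    rw [Finset.mul_sum]
    exact Finset.sum_le_card_nsmul _ _ _ fun x hx =>
      ncard_nonadj_le_of_mem_templatePart (hA x hx) hi
  have hdiff := Set.le_ncard_sdiff E (L i)
  obtain ⟨y, ⟨hy, hyE⟩, hyA⟩ := exists_mem_forall_notMem_of_sum_ncard_lt (P := L i \ E) (A := A)
    (B := fun x => {w ∈ L i | ¬ G.Adj x w}) (by omega)
  exact ⟨y, hy, hyE, fun x hx => by by_contra h; exact hyA x hx ⟨hy, h⟩⟩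

variable [Fintype V]

theorem ncard_adj_templatePart_lt (hfree : IsInducedFree G (doubleStarGraph s))
    (hω : 2 ≤ G.cliqueNum) (hT : IsTemplate G s L0 L) (hiI : i ∈ I) (hiJ : i ∉ J) {t : Fin k}
    (htI : t ∉ I) (htJ : t ∉ J) (hv : v ∈ templatePart G s L0 L I) :
    {u ∈ templatePart G s L0 L J | G.Adj v u}.ncard < G.cliqueNum ^ s := by
  obtain ⟨-, -, -, -, hsize, hnonadj⟩ := hT
  by_contra! hbig
  obtain ⟨S, hSsub, hS, hScard⟩ := exists_isIndepSet_of_cliqueNum_pow_le hω hbig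
  obtain ⟨c, hc, hvc⟩ := (hv.2.2 i).2 hiI
  have hnbrs : G.cliqueNum ^ s ≤ (L t \ {w ∈ L t | ¬ G.Adj c w}).ncard := by
    have hLt := (hsize t).1
    have hnon := hnonadj i t (fun h => htI (h ▸ hiI)) c hc
    have hdiff := Set.le_ncard_sdiff {w ∈ L t | ¬ G.Adj c w} (L t)
    have hpow : G.cliqueNum ^ s ≤ G.cliqueNum ^ (s + 3) :=
      Nat.pow_le_pow_right (by omega) (by omega)
    have hgrow : 2 * G.cliqueNum ^ (s + 3) ≤ G.cliqueNum ^ (s + 5) := by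
      rw [show G.cliqueNum ^ (s + 5) = G.cliqueNum ^ 2 * G.cliqueNum ^ (s + 3) by ring]
      exact Nat.mul_le_mul_right _ (by nlinarith)
    omega
  obtain ⟨T, hTsub, hTind, hTcard⟩ := exists_isIndepSet_of_cliqueNum_pow_le hω hnbrs
  have hTL : ∀ w ∈ T, w ∈ L t ∧ G.Adj c w := fun w hw => by
    obtain ⟨hwL, hwc⟩ := hTsub hw
    exact ⟨hwL, by by_contra h; exact hwc ⟨hwL, h⟩⟩
  have hSM : ∀ w ∈ S, w ∈ templatePart G s L0 L J ∧ G.Adj v w := fun w hw => hSsub hw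
  exact hfree.not_isIndContained (doubleStarGraph_isIndContained_of_finset hScard hTcard hvc
    (fun w hw => (hSM w hw).2) (fun w hw => (hTL w hw).2)
    (fun w hw => not_adj_of_mem_templatePart hv htI (hTL w hw).1)
    (fun w hw h => not_adj_of_mem_templatePart (hSM w hw).1 hiJ hc h.symm)
    (fun hvT => notMem_templatePart_of_mem (hTL v hvT).1 hv)
    (fun hcS => notMem_templatePart_of_mem hc (hSM c hcS).1)
    (hS.union hTind fun a ha b hb => not_adj_of_mem_templatePart (hSM a ha).1 htJ (hTL b hb).1))

theorem sCrowded_templatePart (hfree : IsInducedFree G (doubleStarGraph s))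
    (hω : 7 * G.cliqueNum ^ 3 > 7 * G.cliqueNum + s) (hT : IsTemplate G s L0 L)
    (hiI : i ∈ I) (hiJ : i ∉ J) {j : Fin k} (hjJ : j ∈ J) (hjI : j ∉ I) :
    SCrowded G s (templatePart G s L0 L I) (templatePart G s L0 L J) := by
  classical
  obtain ⟨-, -, -, -, hsize, hnonadj⟩ := hT
  rintro ⟨X, hX, hXI, hXJ⟩
  obtain ⟨A, hA⟩ := (Set.toFinite (X ∩ templatePart G s L0 L I)).exists_finset_coe
  obtain ⟨B, hB⟩ := (Set.toFinite (X ∩ templatePart G s L0 L J)).exists_finset_coe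
  have hAM : ∀ x ∈ A, x ∈ templatePart G s L0 L I := fun x hx =>
    (show x ∈ X ∩ templatePart G s L0 L I from hA ▸ hx).2
  have hBM : ∀ x ∈ B, x ∈ templatePart G s L0 L J := fun x hx =>
    (show x ∈ X ∩ templatePart G s L0 L J from hB ▸ hx).2
  have hAcard : #A = s := by rw [← Set.ncard_coe_finset, hA, hXI]
  have hBcard : #B = s := by rw [← Set.ncard_coe_finset, hB, hXJ]
  have hpos : 0 < G.cliqueNum ^ (s + 2) :=
    pow_pos (Nat.pos_of_ne_zero fun h => by simp [h] at hω) _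
  have hgap :
      7 * G.cliqueNum ^ (s + 3) + s * G.cliqueNum ^ (s + 2) < 7 * G.cliqueNum ^ (s + 5) := by
    have := Nat.mul_lt_mul_of_pos_right hω hpos
    ring_nf at this ⊢
    omega
  obtain ⟨a, ha, -, haA⟩ := exists_mem_forall_adj_of_subset_templatePart hAM hiI (E := ∅) (by
    have := (hsize i).1
    rw [hAcard, Set.ncard_empty]
    omega)
  obtain ⟨b, hb, hab, hbB⟩ := exists_mem_forall_adj_of_subset_templatePart hBM hjJ
    (E := {w ∈ L j | ¬ G.Adj a w}) (by
      have := (hsize j).1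
      have := hnonadj i j (fun h => hjI (h ▸ hiI)) a ha
      rw [hBcard]
      omega)
  refine hfree.not_isIndContained (doubleStarGraph_isIndContained_of_finset hAcard hBcard
    (by by_contra h; exact hab ⟨hb, h⟩) (fun w hw => (haA w hw).symm) (fun w hw => (hbB w hw).symm)
    (fun w hw h => not_adj_of_mem_templatePart (hBM w hw) hiJ ha h.symm)
    (fun w hw h => not_adj_of_mem_templatePart (hAM w hw) hjI hb h.symm)
    (fun h => notMem_templatePart_of_mem ha (hBM a h))
    (fun h => notMem_templatePart_of_mem hb (hAM b h)) ?_)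
  rw [hA, hB, ← Set.inter_union_distrib_left]
  exact (isStableSet_iff_isIndepSet.1 hX).mono Set.inter_subset_left

end Template

theorem not_sCrowded_of_ncard_adj_lt {V : Type*} [Fintype V] {G : SimpleGraph V} {s : ℕ}
    (hω : 2 ≤ G.cliqueNum) {A B : Set V} (hAB : Disjoint A B)
    (hA : G.cliqueNum ^ s ≤ A.ncard) (hB : (s + 1) * G.cliqueNum ^ s ≤ B.ncard)
    (hfew : ∀ v ∈ A, {u ∈ B | G.Adj v u}.ncard < G.cliqueNum ^ s) : ¬ SCrowded G s A B := by
  obtain ⟨SA, hSA, hSAi, hSAcard⟩ := exists_isIndepSet_of_cliqueNum_pow_le hω hA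
  have hrest : G.cliqueNum ^ s ≤ (B \ ⋃ x ∈ SA, {u ∈ B | G.Adj x u}).ncard := by
    have hcover := ncard_le_ncard_sdiff_biUnion_add_sum B SA (fun x => {u ∈ B | G.Adj x u})
    have hsum := Finset.sum_le_card_nsmul SA (fun x => {u ∈ B | G.Adj x u}.ncard) _
      fun x hx => (hfew x (hSA hx)).le
    rw [hSAcard, smul_eq_mul] at hsum
    nlinarith
  obtain ⟨SB, hSB, hSBi, hSBcard⟩ := exists_isIndepSet_of_cliqueNum_pow_le hω hrest
  have hSBB : (SB : Set V) ⊆ B := hSB.trans Set.sdiff_subset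
  refine not_not.2 ⟨↑SA ∪ ↑SB, isStableSet_iff_isIndepSet.2 (hSAi.union hSBi fun a ha b hb h =>
    (hSB hb).2 (Set.mem_biUnion ha ⟨hSBB hb, h⟩)), ?_, ?_⟩
  · rw [Set.union_inter_distrib_right, Set.inter_eq_left.2 hSA,
      (hAB.mono_right hSBB).symm.inter_eq, Set.union_empty, Set.ncard_coe_finset, hSAcard]
  · rw [Set.union_inter_distrib_right, Set.inter_eq_left.2 hSBB,
      ((hAB.mono_left hSA)).inter_eq, Set.empty_union, Set.ncard_coe_finset, hSBcard]

theorem template_nested_general {V : Type*} [Fintype V] (G : SimpleGraph V) (s : ℕ)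
    (hfree : IsInducedFree G (doubleStarGraph s))
    (hω : 7 * G.cliqueNum ^ 3 > 7 * G.cliqueNum + s)
    (L0 : Set V) (k : ℕ) (L : Fin k → Set V) (hT : IsOptimalTemplate G s L0 L)
    (m : ℕ) (hm : (s+1) * G.cliqueNum ^ s ≤ m)
    (I J : Set (Fin k)) (hIJ : I ≠ J)
    (hI : m < (templatePart G s L0 L I).ncard) (hJ : m < (templatePart G s L0 L J).ncard) :
    (J ⊆ I ∧ ∀ v ∈ templatePart G s L0 L I,
        ({u ∈ templatePart G s L0 L J | G.Adj v u}).ncard < G.cliqueNum ^ s) ∨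
    (I ⊆ J ∧ ∀ v ∈ templatePart G s L0 L J,
        ({u ∈ templatePart G s L0 L I | G.Adj v u}).ncard < G.cliqueNum ^ s) ∨
    (I ∪ J = Set.univ ∧
      SCrowded G s (templatePart G s L0 L I) (templatePart G s L0 L J)) := by
  have hω2 : 2 ≤ G.cliqueNum := by
    by_contra! h
    interval_cases G.cliqueNum <;> omega
  by_cases hJI : J ⊆ I
  · obtain ⟨i, hiI, hiJ⟩ := Set.not_subset.1 fun h => hIJ (h.antisymm hJI)
    refine .inl ⟨hJI, fun v hv => ?_⟩
    obtain ⟨t, ht⟩ := exists_notMem_of_mem_templatePart hv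
    exact ncard_adj_templatePart_lt hfree hω2 hT.1 hiI hiJ ht (fun h => ht (hJI h)) hv
  by_cases hIJ' : I ⊆ J
  · obtain ⟨j, hjJ, hjI⟩ := Set.not_subset.1 hJI
    refine .inr (.inl ⟨hIJ', fun v hv => ?_⟩)
    obtain ⟨t, ht⟩ := exists_notMem_of_mem_templatePart hv
    exact ncard_adj_templatePart_lt hfree hω2 hT.1 hjJ hjI ht (fun h => ht (hIJ' h)) hv
  obtain ⟨i, hiI, hiJ⟩ := Set.not_subset.1 hIJ'
  obtain ⟨j, hjJ, hjI⟩ := Set.not_subset.1 hJI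
  have hcrowded := sCrowded_templatePart hfree hω hT.1 hiI hiJ hjJ hjI
  refine .inr (.inr ⟨Set.eq_univ_of_forall fun t => ?_, hcrowded⟩)
  by_contra ht
  rw [Set.mem_union, not_or] at ht
  have hMI : G.cliqueNum ^ s ≤ (templatePart G s L0 L I).ncard := by nlinarith
  exact not_sCrowded_of_ncard_adj_lt hω2 (disjoint_templatePart hIJ) hMI (hm.trans hJ.le)
    (fun v hv => ncard_adj_templatePart_lt hfree hω2 hT.1 hiI hiJ ht.1 ht.2 hv) hcrowded

/-- If `m ≥ (s+1) ω^s`, `ω³ > ω + s/7` and `I ≠ J` are `m`-large, then either `J ⊆ I` and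
every vertex of `M_I` has fewer than `ω^s` neighbours in `M_J`; or `I ⊆ J` and every vertex
of `M_J` has fewer than `ω^s` neighbours in `M_I`; or `I ∪ J = {1,…,k}` and `M_I, M_J` are
`s`-crowded. -/
theorem template_nested {V : Type*} [Fintype V] (G : SimpleGraph V) (s : ℕ) (hs : 1 ≤ s)
    (hfree : IsInducedFree G (doubleStarGraph s))
    (hω : 7 * G.cliqueNum ^ 3 > 7 * G.cliqueNum + s)
    (L0 : Set V) (k : ℕ) (L : Fin k → Set V) (hT : IsOptimalTemplate G s L0 L)
    (m : ℕ) (hm : (s+1) * G.cliqueNum ^ s ≤ m)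
    (I J : Set (Fin k)) (hIJ : I ≠ J)
    (hI : m < (templatePart G s L0 L I).ncard) (hJ : m < (templatePart G s L0 L J).ncard) :
    (J ⊆ I ∧ ∀ v ∈ templatePart G s L0 L I,
        ({u ∈ templatePart G s L0 L J | G.Adj v u}).ncard < G.cliqueNum ^ s) ∨
    (I ⊆ J ∧ ∀ v ∈ templatePart G s L0 L J,
        ({u ∈ templatePart G s L0 L I | G.Adj v u}).ncard < G.cliqueNum ^ s) ∨
    (I ∪ J = Set.univ ∧
      SCrowded G s (templatePart G s L0 L I) (templatePart G s L0 L J)) :=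
  template_nested_general G s hfree hω L0 k L hT m hm I J hIJ hI hJ
end

section
/- Let s ≥ 1 be an integer, let G be an H_s-free graph with clique number ω satisfying ω³ > ω + s/7, and let 𝓛 = (L_0, L_1, …, L_k) be an optimal s-template in G. Let m ≥ (s+1)ω^s. Then the number of m-large subsets of {1,…,k} is at most max(k−1, 0). -/
open SimpleGraph Set

private lemma ramsey_aux {V : Type*} (G : SimpleGraph V) :
    ∀ (n a b : ℕ) (A : Finset V), a + b ≤ n → (a + b).choose a ≤ A.card →
      (∃ K ⊆ A, G.IsNClique (a + 1) K) ∨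
      (∃ S ⊆ A, S.card = b + 1 ∧ ∀ u ∈ S, ∀ v ∈ S, u ≠ v → ¬ G.Adj u v) := by
  classical
  intro n
  induction n with
  | zero =>
    intro a b A hab hA
    obtain rfl : a = 0 := by omega
    obtain rfl : b = 0 := by omega
    simp only [Nat.choose_self] at hA
    obtain ⟨v, hv⟩ := Finset.card_pos.mp (lt_of_lt_of_le one_pos hA)
    exact Or.inl ⟨{v}, by simpa using hv, by simp [SimpleGraph.isNClique_iff,
      SimpleGraph.IsClique]⟩
  | succ n ih =>
    intro a b A hab hA
    match a, b with
    | 0, b =>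
      simp only [Nat.choose_zero_right] at hA
      obtain ⟨v, hv⟩ := Finset.card_pos.mp (lt_of_lt_of_le one_pos hA)
      exact Or.inl ⟨{v}, by simpa using hv, by simp [SimpleGraph.isNClique_iff,
        SimpleGraph.IsClique]⟩
    | a + 1, 0 =>
      have : 1 ≤ A.card := le_trans (Nat.choose_pos (by omega)) hA
      obtain ⟨v, hv⟩ := Finset.card_pos.mp this
      refine Or.inr ⟨{v}, by simpa using hv, by simp, ?_⟩
      intro u hu w hw huw
      simp only [Finset.mem_singleton] at hu hw
      subst hu; subst hw; exact absurd rfl huw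
    | a + 1, b + 1 =>
      have hApos : 0 < A.card := by
        refine lt_of_lt_of_le ?_ hA
        exact Nat.choose_pos (by omega)
      obtain ⟨v, hv⟩ := Finset.card_pos.mp hApos
      set N := (A.erase v).filter (fun u => G.Adj v u) with hN
      set Nc := (A.erase v).filter (fun u => ¬ G.Adj v u) with hNc
      have hsum : N.card + Nc.card = A.card - 1 := by
        rw [hN, hNc, Finset.card_filter_add_card_filter_not,
          Finset.card_erase_of_mem hv]
      have hpascal : (a + 1 + (b + 1)).choose (a + 1)
          = (a + b + 1).choose a + (a + b + 1).choose (a + 1) := by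
        have : a + 1 + (b + 1) = (a + b + 1) + 1 := by omega
        rw [this, Nat.choose_succ_succ]
      by_cases hcase : (a + (b + 1)).choose a ≤ N.card
      · have hrec := ih a (b + 1) N (by omega) hcase
        rcases hrec with ⟨K, hKN, hK⟩ | ⟨S, hSN, hScard, hSst⟩
        · left
          refine ⟨insert v K, ?_, ?_⟩
          · intro x hx
            rcases Finset.mem_insert.mp hx with rfl | hx
            · exact hv
            · exact Finset.mem_of_mem_erase (Finset.mem_of_mem_filter x (hKN hx))
          · exact hK.insert (fun u hu => (Finset.mem_filter.mp (hKN hu)).2)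
        · right
          refine ⟨S, le_trans hSN ?_, hScard, hSst⟩
          intro x hx
          exact Finset.mem_of_mem_erase (Finset.mem_of_mem_filter x hx)
      · have hNc_card : (a + 1 + b).choose (a + 1) ≤ Nc.card := by
          have h1 : (a + b + 1).choose a + (a + b + 1).choose (a + 1) ≤ A.card := by
            rw [← hpascal]; exact hA
          have h2 : a + (b + 1) = a + b + 1 := by omega
          rw [h2] at hcase
          have h3 : a + 1 + b = a + b + 1 := by omega
          rw [h3]
          omega
        have hrec := ih (a + 1) b Nc (by omega) hNc_card
        rcases hrec with ⟨K, hKN, hK⟩ | ⟨S, hSN, hScard, hSst⟩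
        · left
          exact ⟨K, fun x hx => Finset.mem_of_mem_erase
            (Finset.mem_of_mem_filter x (hKN hx)), hK⟩
        · right
          refine ⟨insert v S, ?_, ?_, ?_⟩
          · intro x hx
            rcases Finset.mem_insert.mp hx with rfl | hx
            · exact hv
            · exact Finset.mem_of_mem_erase (Finset.mem_of_mem_filter x (hSN hx))
          · have hvS : v ∉ S := fun h => (Finset.ne_of_mem_erase
              (Finset.mem_of_mem_filter v (hSN h))) rfl
            rw [Finset.card_insert_of_notMem hvS, hScard]
          · intro x hx y hy hxy
            rcases Finset.mem_insert.mp hx with rfl | hx'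
            · rcases Finset.mem_insert.mp hy with rfl | hy'
              · exact absurd rfl hxy
              · exact (Finset.mem_filter.mp (hSN hy')).2
            · rcases Finset.mem_insert.mp hy with rfl | hy'
              · intro h
                exact (Finset.mem_filter.mp (hSN hx')).2 h.symm
              · exact hSst x hx' y hy' hxy

/-- If `A` is large enough, it contains a stable set of size `r+1`. -/
private lemma stable_of_card {V : Type*} [Fintype V] (G : SimpleGraph V) (r : ℕ)
    (A : Finset V) (h : (G.cliqueNum + r).choose G.cliqueNum ≤ A.card) :
    ∃ S ⊆ A, S.card = r + 1 ∧ ∀ u ∈ S, ∀ v ∈ S, u ≠ v → ¬ G.Adj u v := by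
  rcases ramsey_aux G (G.cliqueNum + r) G.cliqueNum r A le_rfl h with ⟨K, _, hK⟩ | hS
  · exfalso
    have h1 : K.card ≤ G.cliqueNum :=
      @SimpleGraph.IsClique.card_le_cliqueNum V G _ K hK.isClique
    rw [hK.card_eq] at h1
    omega
  · exact hS


private lemma choose_bound1 (w : ℕ) (hw : 1 ≤ w) :
    ∀ s : ℕ, (w + s).choose s ≤ (s + 1) * w ^ s := by
  intro s
  induction s with
  | zero => simp
  | succ s ih =>
    have hid : (w + s + 1) * (w + s).choose s = (w + s + 1).choose (s + 1) * (s + 1) :=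
      (Nat.add_one_mul_choose_eq (w + s) s)
    have key : (w + s + 1).choose (s + 1) * (s + 1) ≤ ((s + 2) * w ^ (s + 1)) * (s + 1) := by
      rw [← hid]
      calc (w + s + 1) * (w + s).choose s ≤ (w + s + 1) * ((s + 1) * w ^ s) :=
            Nat.mul_le_mul_left _ ih
        _ ≤ ((s + 2) * w ^ (s + 1)) * (s + 1) := by
            have h1 : w + s + 1 ≤ (s + 2) * w := by nlinarith
            calc (w + s + 1) * ((s + 1) * w ^ s) = ((w + s + 1) * w ^ s) * (s + 1) := by ring
              _ ≤ ((s + 2) * w * w ^ s) * (s + 1) := by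
                  exact Nat.mul_le_mul_right _ (Nat.mul_le_mul_right _ h1)
              _ = ((s + 2) * w ^ (s + 1)) * (s + 1) := by ring
    have : w + (s+1) = w + s + 1 := by omega
    rw [this]
    exact Nat.le_of_mul_le_mul_right key (by omega)

private lemma choose_bound2 (w : ℕ) (hw : 2 ≤ w) :
    ∀ r : ℕ, (r + 3) * (w + r).choose r ≤ (r + 2) * w ^ (r + 1) := by
  intro r
  induction r using Nat.strong_induction_on with
  | _ r ih =>
    match r with
    | 0 =>
      simp only [Nat.choose_zero_right, mul_one, zero_add, pow_one]
      omega
    | 1 =>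
      simp only [Nat.choose_one_right]
      have h1 : 2 * w ≤ w ^ 2 := by rw [pow_two]; exact Nat.mul_le_mul_right w hw
      have h2 : (1:ℕ) + 1 = 2 := rfl
      rw [h2]
      nlinarith [h1, hw]
    | (t + 2) =>
      have ih1 := ih (t + 1) (by omega)
      -- ih1 : (t + 4) * (w + (t+1)).choose (t+1) ≤ (t + 3) * w ^ (t + 2)
      have hid : (w + t + 2) * (w + t + 1).choose (t + 1)
          = (w + t + 2).choose (t + 2) * (t + 2) := Nat.add_one_mul_choose_eq (w + t + 1) (t + 1)
      have hscalar : (t + 5) * (t + 3) * (w + t + 2) ≤ (t + 2) * ((t + 4) * (t + 4)) * w := by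
        nlinarith [Nat.mul_le_mul_right (t^3+9*t^2+24*t+17) hw]
      have ew : w + (t + 1) = w + t + 1 := by omega
      rw [ew] at ih1
      have key : ((t + 5) * (w + t + 2).choose (t + 2)) * ((t + 2) * (t + 4)) ≤
          ((t + 4) * w ^ (t + 3)) * ((t + 2) * (t + 4)) := by
        calc ((t + 5) * (w + t + 2).choose (t + 2)) * ((t + 2) * (t + 4))
            = ((t + 5) * (t + 4)) * ((w + t + 2).choose (t + 2) * (t + 2)) := by ring
          _ = ((t + 5) * (t + 4)) * ((w + t + 2) * (w + t + 1).choose (t + 1)) := by rw [hid]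
          _ = ((t + 5) * (w + t + 2)) * ((t + 4) * (w + t + 1).choose (t + 1)) := by ring
          _ ≤ ((t + 5) * (w + t + 2)) * ((t + 3) * w ^ (t + 2)) :=
              Nat.mul_le_mul_left _ ih1
          _ = ((t + 5) * (t + 3) * (w + t + 2)) * w ^ (t + 2) := by ring
          _ ≤ ((t + 2) * ((t + 4) * (t + 4)) * w) * w ^ (t + 2) :=
              Nat.mul_le_mul_right _ hscalar
          _ = ((t + 4) * w ^ (t + 3)) * ((t + 2) * (t + 4)) := by ring
      have hfin : (t + 5) * (w + t + 2).choose (t + 2) ≤ (t + 4) * w ^ (t + 3) :=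
        Nat.le_of_mul_le_mul_right key (by positivity)
      have e2 : w + (t + 2) = w + t + 2 := by omega
      have e3 : t + 2 + 3 = t + 5 := by omega
      have e4 : t + 2 + 2 = t + 4 := by omega
      have e5 : t + 2 + 1 = t + 3 := by omega
      rw [e2, e3, e4, e5]
      exact hfin


private lemma laminar_bound {α : Type*} [DecidableEq α] :
    ∀ (n : ℕ) (F : Finset (Finset α)) (S : Finset α), F.card = n →
      (∀ C ∈ F, C ⊆ S) → (∀ C ∈ F, 2 ≤ C.card) →
      (∀ C ∈ F, ∀ D ∈ F, C ⊆ D ∨ D ⊆ C ∨ Disjoint C D) →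
      F.card ≤ S.card - 1 := by
  intro n
  induction n using Nat.strong_induction_on with
  | _ n ih =>
    intro F S hcard hsub h2 hlam
    rcases F.eq_empty_or_nonempty with rfl | hne
    · simp
    obtain ⟨C, hCF, hCmin⟩ := F.exists_min_image (fun C => C.card) hne
    have hC2 : 2 ≤ C.card := h2 C hCF
    obtain ⟨c₀, hc₀⟩ := Finset.card_pos.mp (by omega : 0 < C.card)
    set X := C.erase c₀ with hX
    have hXC : X ⊆ C := Finset.erase_subset _ _
    have hXcard : X.card = C.card - 1 := Finset.card_erase_of_mem hc₀
    have hcases : ∀ D ∈ F.erase C, C ⊆ D ∨ Disjoint C D := by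
      intro D hD
      have hDF := Finset.mem_of_mem_erase hD
      have hDC := Finset.ne_of_mem_erase hD
      rcases hlam C hCF D hDF with h | h | h
      · exact Or.inl h
      · exfalso
        have := hCmin D hDF
        have hDCc : D.card ≤ C.card := Finset.card_le_card h
        have : D = C := Finset.eq_of_subset_of_card_le h (by omega)
        exact hDC this
      · exact Or.inr h
    have hinj : Set.InjOn (fun D => D \ X) (F.erase C : Set (Finset α)) := by
      intro D1 h1 D2 h2' heq
      simp only at heq
      have hc1 := hcases D1 h1
      have hc2 := hcases D2 h2'
      have hmem : ∀ D, C ⊆ D → c₀ ∈ D \ X := by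
        intro D hCD
        exact Finset.mem_sdiff.mpr ⟨hCD hc₀, Finset.notMem_erase c₀ C⟩
      have hnot : ∀ D, Disjoint C D → c₀ ∉ D \ X := by
        intro D hd hmem'
        exact (Finset.disjoint_left.mp hd hc₀) (Finset.mem_sdiff.mp hmem').1
      rcases hc1 with hc1 | hc1 <;> rcases hc2 with hc2 | hc2
      · have e1 : D1 = D1 \ X ∪ X := by
          rw [Finset.sdiff_union_of_subset (hXC.trans hc1)]
        have e2 : D2 = D2 \ X ∪ X := by
          rw [Finset.sdiff_union_of_subset (hXC.trans hc2)]
        rw [e1, e2, heq]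
      · exact absurd (heq ▸ hmem D1 hc1) (hnot D2 hc2)
      · exact absurd (heq ▸ hnot D1 hc1) (by simp [hmem D2 hc2])
      · have e1 : D1 \ X = D1 := Finset.sdiff_eq_self_of_disjoint
          (Finset.disjoint_of_subset_right hXC hc1.symm)
        have e2 : D2 \ X = D2 := Finset.sdiff_eq_self_of_disjoint
          (Finset.disjoint_of_subset_right hXC hc2.symm)
        rw [← e1, ← e2, heq]
    set F' := (F.erase C).image (fun D => D \ X) with hF'
    have hF'card : F'.card = F.card - 1 := by
      rw [hF', Finset.card_image_of_injOn hinj, Finset.card_erase_of_mem hCF]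
    have hS'sub : ∀ C' ∈ F', C' ⊆ S \ X := by
      intro C' hC'
      obtain ⟨D, hD, rfl⟩ := Finset.mem_image.mp hC'
      exact Finset.sdiff_subset_sdiff (hsub D (Finset.mem_of_mem_erase hD)) le_rfl
    have hS'2 : ∀ C' ∈ F', 2 ≤ C'.card := by
      intro C' hC'
      obtain ⟨D, hD, rfl⟩ := Finset.mem_image.mp hC'
      rcases hcases D hD with h | h
      · have hXD : X ⊆ D := hXC.trans h
        have : (D \ X).card = D.card - X.card := Finset.card_sdiff_of_subset hXD
        have hDne : D ≠ C := Finset.ne_of_mem_erase hD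
        have hCD : C ⊂ D := ssubset_of_subset_of_ne h (fun e => hDne e.symm)
        have : C.card < D.card := Finset.card_lt_card hCD
        omega
      · rw [Finset.sdiff_eq_self_of_disjoint (Finset.disjoint_of_subset_right hXC h.symm)]
        exact h2 D (Finset.mem_of_mem_erase hD)
    have hS'lam : ∀ C' ∈ F', ∀ D' ∈ F', C' ⊆ D' ∨ D' ⊆ C' ∨ Disjoint C' D' := by
      intro C' hC' D' hD'
      obtain ⟨D1, hD1, rfl⟩ := Finset.mem_image.mp hC'
      obtain ⟨D2, hD2, rfl⟩ := Finset.mem_image.mp hD'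
      rcases hlam D1 (Finset.mem_of_mem_erase hD1) D2 (Finset.mem_of_mem_erase hD2)
        with h | h | h
      · exact Or.inl (Finset.sdiff_subset_sdiff h le_rfl)
      · exact Or.inr (Or.inl (Finset.sdiff_subset_sdiff h le_rfl))
      · exact Or.inr (Or.inr (h.mono Finset.sdiff_subset Finset.sdiff_subset))
    have hF1 : 1 ≤ F.card := Finset.card_pos.mpr hne
    have hrec := ih (F.card - 1) (by omega) F' (S \ X) hF'card hS'sub hS'2 hS'lam
    have hXS : X ⊆ S := hXC.trans (hsub C hCF)
    have hSX : (S \ X).card = S.card - X.card := Finset.card_sdiff_of_subset hXS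
    have hc₀S : c₀ ∈ S := hsub C hCF hc₀
    have hc₀X : c₀ ∉ X := Finset.notMem_erase c₀ C
    have hXS' : X.card < S.card := Finset.card_lt_card
      (Finset.ssubset_iff_of_subset hXS |>.mpr ⟨c₀, hc₀S, hc₀X⟩)
    omega

private lemma no_doubleStar_embed {V : Type*} (G : SimpleGraph V) (s : ℕ)
    (hfree : IsInducedFree G (doubleStarGraph s))
    (x y : V) (P Q : Finset V)
    (hadj : G.Adj x y)
    (hP : P.card = s) (hQ : Q.card = s)
    (hxP : ∀ p ∈ P, G.Adj x p) (hyQ : ∀ q ∈ Q, G.Adj y q)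
    (hyP : ∀ p ∈ P, ¬ G.Adj y p) (hxQ : ∀ q ∈ Q, ¬ G.Adj x q)
    (hPst : ∀ p ∈ P, ∀ p' ∈ P, p ≠ p' → ¬ G.Adj p p')
    (hQst : ∀ q ∈ Q, ∀ q' ∈ Q, q ≠ q' → ¬ G.Adj q q')
    (hPQ : ∀ p ∈ P, ∀ q ∈ Q, ¬ G.Adj p q)
    (hxP' : x ∉ P) (hxQ' : x ∉ Q) (hyP' : y ∉ P) (hyQ' : y ∉ Q)
    (hdisj : Disjoint P Q) : False := by
  classical
  have pE : ↥P ≃ Fin s := P.equivFinOfCardEq hP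
  have qE : ↥Q ≃ Fin s := Q.equivFinOfCardEq hQ
  set pv : Fin s → V := fun i => ((pE.symm i : ↥P) : V) with hpv
  set qv : Fin s → V := fun i => ((qE.symm i : ↥Q) : V) with hqv
  have hpvP : ∀ i, pv i ∈ P := fun i => (pE.symm i).2
  have hqvQ : ∀ i, qv i ∈ Q := fun i => (qE.symm i).2
  have hpvinj : Function.Injective pv :=
    fun i j h => pE.symm.injective (Subtype.ext h)
  have hqvinj : Function.Injective qv :=
    fun i j h => qE.symm.injective (Subtype.ext h)
  set f : Fin (2*s+2) → V := fun a =>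
    if h0 : (a : ℕ) = 0 then x
    else if h1 : (a : ℕ) = 1 then y
    else if h : (a : ℕ) < s + 2 then pv ⟨(a : ℕ) - 2, by omega⟩
    else qv ⟨(a : ℕ) - (s + 2), by have := a.2; omega⟩ with hf
  have f0 : ∀ a : Fin (2*s+2), (a : ℕ) = 0 → f a = x := by
    intro a h; simp only [hf]; rw [dif_pos h]
  have f1 : ∀ a : Fin (2*s+2), (a : ℕ) = 1 → f a = y := by
    intro a h; simp only [hf]; rw [dif_neg (by omega), dif_pos h]
  have fP : ∀ (a : Fin (2*s+2)) (h1 : 2 ≤ (a : ℕ)) (h2 : (a : ℕ) ≤ s + 1),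
      f a = pv ⟨(a : ℕ) - 2, by omega⟩ := by
    intro a h1 h2
    simp only [hf]
    rw [dif_neg (by omega), dif_neg (by omega), dif_pos (by omega)]
  have fQ : ∀ (a : Fin (2*s+2)) (h1 : s + 2 ≤ (a : ℕ)),
      f a = qv ⟨(a : ℕ) - (s + 2), by have := a.2; omega⟩ := by
    intro a h1
    simp only [hf]
    rw [dif_neg (by omega), dif_neg (by omega), dif_neg (by omega)]
  -- membership classification
  have classify : ∀ a : Fin (2*s+2), (a : ℕ) = 0 ∨ (a : ℕ) = 1 ∨
      (2 ≤ (a : ℕ) ∧ (a : ℕ) ≤ s + 1) ∨ (s + 2 ≤ (a : ℕ)) := by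
    intro a; have := a.2; omega
  have hxy : x ≠ y := hadj.ne
  have key : ∀ a b : Fin (2*s+2), (a : ℕ) < (b : ℕ) →
      (G.Adj (f a) (f b) ↔ (doubleStarGraph s).Adj a b) := by
    intro a b hab
    have hne : a ≠ b := fun h => by rw [h] at hab; omega
    have star_iff : (doubleStarGraph s).Adj a b ↔
        (((a : ℕ) = 0 ∧ (b : ℕ) = 1) ∨
         ((a : ℕ) = 0 ∧ 2 ≤ (b : ℕ) ∧ (b : ℕ) ≤ s+1) ∨
         ((a : ℕ) = 1 ∧ s+2 ≤ (b : ℕ))) := by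
      rw [doubleStarGraph, SimpleGraph.fromRel_adj]
      constructor
      · rintro ⟨-, h | h⟩
        · exact h
        · rcases h with ⟨h1, h2⟩ | ⟨h1, h2, h3⟩ | ⟨h1, h2⟩ <;> omega
      · intro h
        exact ⟨hne, Or.inl h⟩
    rcases classify a with ha | ha | ⟨ha1, ha2⟩ | ha <;>
      rcases classify b with hb | hb | ⟨hb1, hb2⟩ | hb
    all_goals (try omega)
    · -- a = 0, b = 1
      rw [f0 a ha, f1 b hb, star_iff]
      exact ⟨fun _ => Or.inl ⟨ha, hb⟩, fun _ => hadj⟩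
    · -- a = 0, b ∈ P-block
      rw [f0 a ha, fP b hb1 hb2, star_iff]
      constructor
      · intro _; exact Or.inr (Or.inl ⟨ha, hb1, hb2⟩)
      · intro _; exact hxP _ (hpvP _)
    · -- a = 0, b ∈ Q-block
      rw [f0 a ha, fQ b hb, star_iff]
      constructor
      · intro h; exact absurd h (hxQ _ (hqvQ _))
      · intro h; omega
    · -- a = 1, b ∈ P-block
      rw [f1 a ha, fP b hb1 hb2, star_iff]
      constructor
      · intro h; exact absurd h (hyP _ (hpvP _))
      · intro h; omega
    · -- a = 1, b ∈ Q-block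
      rw [f1 a ha, fQ b hb, star_iff]
      constructor
      · intro _; exact Or.inr (Or.inr ⟨ha, hb⟩)
      · intro _; exact hyQ _ (hqvQ _)
    · -- both in P-block
      rw [fP a ha1 ha2, fP b hb1 hb2, star_iff]
      constructor
      · intro h
        refine absurd h (hPst _ (hpvP _) _ (hpvP _) ?_)
        intro he
        have := hpvinj he
        simp only [Fin.mk.injEq] at this
        omega
      · intro h; omega
    · -- a ∈ P-block, b ∈ Q-block
      rw [fP a ha1 ha2, fQ b hb, star_iff]
      constructor
      · intro h; exact absurd h (hPQ _ (hpvP _) _ (hqvQ _))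
      · intro h; omega
    · -- both in Q-block
      rw [fQ a ha, fQ b hb, star_iff]
      constructor
      · intro h
        refine absurd h (hQst _ (hqvQ _) _ (hqvQ _) ?_)
        intro he
        have := hqvinj he
        simp only [Fin.mk.injEq] at this
        omega
      · intro h; omega
  have adj_iff : ∀ a b : Fin (2*s+2), G.Adj (f a) (f b) ↔ (doubleStarGraph s).Adj a b := by
    intro a b
    rcases lt_trichotomy (a : ℕ) (b : ℕ) with h | h | h
    · exact key a b h
    · have : a = b := Fin.ext h
      subst this
      exact iff_of_false (G.irrefl) ((doubleStarGraph s).irrefl)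
    · constructor
      · intro hcon; exact ((key b a h).mp hcon.symm).symm
      · intro hcon; exact ((key b a h).mpr hcon.symm).symm
  have finj : Function.Injective f := by
    intro a b h
    by_contra hne
    have : (a : ℕ) ≠ (b : ℕ) := fun he => hne (Fin.ext he)
    -- use distinctness of blocks
    have hval : ∀ c d : Fin (2*s+2), (c:ℕ) < (d:ℕ) → f c = f d → False := by
      intro c d hcd heq
      rcases classify c with hc | hc | ⟨hc1, hc2⟩ | hc <;>
        rcases classify d with hd | hd | ⟨hd1, hd2⟩ | hd
      all_goals (try omega)
      · rw [f0 c hc, f1 d hd] at heq; exact hxy heq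
      · rw [f0 c hc, fP d hd1 hd2] at heq; exact hxP' (heq ▸ hpvP _)
      · rw [f0 c hc, fQ d hd] at heq; exact hxQ' (heq ▸ hqvQ _)
      · rw [f1 c hc, fP d hd1 hd2] at heq; exact hyP' (heq ▸ hpvP _)
      · rw [f1 c hc, fQ d hd] at heq; exact hyQ' (heq ▸ hqvQ _)
      · rw [fP c hc1 hc2, fP d hd1 hd2] at heq
        have := hpvinj heq
        simp only [Fin.mk.injEq] at this
        omega
      · rw [fP c hc1 hc2, fQ d hd] at heq
        exact Finset.disjoint_left.mp hdisj (heq ▸ hpvP _) (hqvQ _)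
      · rw [fQ c hc, fQ d hd] at heq
        have := hqvinj heq
        simp only [Fin.mk.injEq] at this
        omega
    rcases lt_trichotomy (a : ℕ) (b : ℕ) with hlt | hlt | hlt
    · exact hval a b hlt h
    · exact this hlt
    · exact hval b a hlt h.symm
  -- build the isomorphism
  have iso : doubleStarGraph s ≃g G.induce (Set.range f) := by
    refine ⟨Equiv.ofInjective f finj, ?_⟩
    intro a b
    exact adj_iff a b
  exact hfree (Set.range f) ⟨iso.symm⟩


private lemma exists_adj_all {V : Type*} [Fintype V] (G : SimpleGraph V)
    (Li : Set V) (T : Finset V) (c : V → ℕ)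
    (hb : ∀ w ∈ T, 7 * ({x ∈ Li | ¬ G.Adj w x}).ncard ≤ c w)
    (hsum : ∑ w ∈ T, c w < 7 * Li.ncard) :
    ∃ u ∈ Li, ∀ w ∈ T, G.Adj w u := by
  classical
  set LiF := (Set.toFinite Li).toFinset with hLiF
  set Bad := T.biUnion (fun w => (Set.toFinite {x ∈ Li | ¬ G.Adj w x}).toFinset) with hBad
  have hBadcard : 7 * Bad.card ≤ ∑ w ∈ T, c w := by
    calc 7 * Bad.card
        ≤ 7 * ∑ w ∈ T, ((Set.toFinite {x ∈ Li | ¬ G.Adj w x}).toFinset).card :=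
          Nat.mul_le_mul_left 7 Finset.card_biUnion_le
      _ = ∑ w ∈ T, 7 * ((Set.toFinite {x ∈ Li | ¬ G.Adj w x}).toFinset).card := by
          rw [Finset.mul_sum]
      _ ≤ ∑ w ∈ T, c w := Finset.sum_le_sum (fun w hw => by
          rw [← Set.ncard_eq_toFinset_card _ (Set.toFinite _)]
          exact hb w hw)
  have hLicard : LiF.card = Li.ncard :=
    (Set.ncard_eq_toFinset_card _ (Set.toFinite Li)).symm
  have hlt : Bad.card < LiF.card := by omega
  have hne : (LiF \ Bad).Nonempty := by
    rw [← Finset.card_pos]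
    have h1 : (LiF \ Bad).card + Bad.card = (LiF ∪ Bad).card :=
      Finset.card_sdiff_add_card LiF Bad
    have h2 : LiF.card ≤ (LiF ∪ Bad).card :=
      Finset.card_le_card Finset.subset_union_left
    omega
  obtain ⟨u, hu⟩ := hne
  rw [Finset.mem_sdiff] at hu
  refine ⟨u, (Set.Finite.mem_toFinset _).mp hu.1, ?_⟩
  intro w hw
  by_contra hcon
  apply hu.2
  rw [hBad, Finset.mem_biUnion]
  exact ⟨w, hw, (Set.Finite.mem_toFinset _).mpr
    ⟨(Set.Finite.mem_toFinset _).mp hu.1, hcon⟩⟩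

/-- If `m ≥ (s+1) ω^s` and `ω³ > ω + s/7`, then there are at most `max (k-1) 0` `m`-large
subsets of `{1,…,k}`. -/
theorem template_few_large {V : Type*} [Fintype V] (G : SimpleGraph V) (s : ℕ) (hs : 1 ≤ s)
    (hfree : IsInducedFree G (doubleStarGraph s))
    (hω : 7 * G.cliqueNum ^ 3 > 7 * G.cliqueNum + s)
    (L0 : Set V) (k : ℕ) (L : Fin k → Set V) (hT : IsOptimalTemplate G s L0 L)
    (m : ℕ) (hm : (s+1) * G.cliqueNum ^ s ≤ m) :
    ({I : Set (Fin k) | m < (templatePart G s L0 L I).ncard}).ncard ≤ k - 1 := by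
  classical
  obtain ⟨r, rfl⟩ : ∃ r, s = r + 1 := ⟨s - 1, by omega⟩
  obtain ⟨⟨hdisj0, hdisjL, _hclique, _hcompl, hsize, hcross⟩, _hopt⟩ := hT
  set w := G.cliqueNum with hwdef
  have hw2 : 2 ≤ w := by
    rcases Nat.lt_or_ge w 2 with hcon | h
    · exfalso
      have hw01 : w = 0 ∨ w = 1 := by omega
      rcases hw01 with h0 | h0 <;> rw [h0] at hω <;> norm_num at hω
    · exact h
  set M : Set (Fin k) → Set V := fun I => templatePart G (r+1) L0 L I with hM
  -- basic facts about pure vertices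
  have hMnotL : ∀ I v, v ∈ M I → ∀ i : Fin k, v ∉ L i := by
    intro I v hv i hvi
    exact hv.1.1 (Or.inr (Set.mem_iUnion.mpr ⟨i, hvi⟩))
  have hnoadj : ∀ I v, v ∈ M I → ∀ i : Fin k, i ∉ I → ∀ x ∈ L i, ¬ G.Adj v x := by
    intro I v hv i hi x hx hadj
    exact hi ((hv.2.2 i).mp ⟨x, hx, hadj⟩)
  have hfew : ∀ I v, v ∈ M I → ∀ i : Fin k, i ∈ I →
      7 * ({x ∈ L i | ¬ G.Adj v x}).ncard ≤ w ^ (r+3) := by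
    intro I v hv i hi
    rcases hv.2.1.2 i with h | h
    · obtain ⟨u, hu, ha⟩ := (hv.2.2 i).mpr hi
      exact absurd ha (h u hu)
    · exact h
  have hMdisj : ∀ I J : Set (Fin k), I ≠ J → ∀ v, v ∈ M I → v ∈ M J → False := by
    intro I J hne v h1 h2
    exact hne (Set.ext fun i => ((h1.2.2 i).symm.trans (h2.2.2 i)))
  -- numeric abbreviations
  have hCC : (w + (r+1)).choose w ≤ (r+2) * w ^ (r+1) := by
    rw [Nat.choose_symm_add]
    exact choose_bound1 w (by omega) (r+1)
  have hDD3 : (r+3) * (w + r).choose w ≤ (r+2) * w ^ (r+1) := by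
    rw [Nat.choose_symm_add]
    exact choose_bound2 w hw2 r
  have hDDle : (w + r).choose w ≤ w ^ (r+1) := by
    have h1 : (r+3) * (w + r).choose w ≤ (r+3) * w ^ (r+1) :=
      le_trans hDD3 (Nat.mul_le_mul_right _ (by omega))
    exact Nat.le_of_mul_le_mul_left h1 (by omega)
  have hmm : (r+2) * w ^ (r+1) ≤ m := hm
  -- the key contradiction
  have key : ∀ (I J : Set (Fin k)) (i j t : Fin k), i ∈ I → i ∉ J → j ∈ J → j ∉ I →
      t ∉ I → t ∉ J → m < (M I).ncard → m < (M J).ncard → False := by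
    intro I J i j t hiI hiJ hjJ hjI htI htJ hcardI hcardJ
    have hIJ : I ≠ J := fun h => hiJ (h ▸ hiI)
    have hij : i ≠ j := fun h => hjI (h ▸ hiI)
    have htj : t ≠ j := fun h => htJ (h ▸ hjJ)
    set AF := (Set.toFinite (M I)).toFinset with hAF
    set BF := (Set.toFinite (M J)).toFinset with hBF
    have hAFmem : ∀ x, x ∈ AF ↔ x ∈ M I := fun x => Set.Finite.mem_toFinset _
    have hBFmem : ∀ x, x ∈ BF ↔ x ∈ M J := fun x => Set.Finite.mem_toFinset _
    have hAcard : m < AF.card := by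
      rwa [Set.ncard_eq_toFinset_card _ (Set.toFinite (M I))] at hcardI
    have hBcard : m < BF.card := by
      rwa [Set.ncard_eq_toFinset_card _ (Set.toFinite (M J))] at hcardJ
    -- T₂ : stable (r+2)-set in BF
    obtain ⟨T₂, hT₂B, hT₂card, hT₂st⟩ := stable_of_card G (r+1) BF
      (le_trans hCC (le_trans hmm (Nat.le_of_lt hBcard)))
    set AnotN := AF.filter (fun a => ∀ y ∈ T₂, ¬ G.Adj a y) with hAnotN
    by_cases hb1 : (w + r).choose w ≤ AnotN.card
    · -- case (b): stable set far from T₂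
      obtain ⟨SA, hSAsub, hSAcard, hSAst⟩ := stable_of_card G r AnotN hb1
      obtain ⟨SB, hSBsub, hSBcard⟩ := Finset.exists_subset_card_eq (n := r+1) (by omega : r+1 ≤ T₂.card)
      have hSA_MI : ∀ p ∈ SA, p ∈ M I := by
        intro p hp
        exact (hAFmem p).mp (Finset.mem_of_mem_filter p (hSAsub hp))
      have hSB_MJ : ∀ q ∈ SB, q ∈ M J := by
        intro q hq
        exact (hBFmem q).mp (hT₂B (hSBsub hq))
      -- pick u ∈ L i adjacent to all of SA
      obtain ⟨u, huLi, huadj⟩ := exists_adj_all G (L i) SA (fun _ => w ^ (r+3))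
        (fun p hp => by simpa using hfew I p (hSA_MI p hp) i hiI)
        (by
          rw [Finset.sum_const, hSAcard, smul_eq_mul]
          have h1 : (r+1) * w ^ (r+3) < (7 * w ^ 3) * w ^ (r+3) :=
            (Nat.mul_lt_mul_right (by positivity)).mpr (by omega)
          have h2 : (7 * w ^ 3) * w ^ (r+3) = 7 * w ^ (r+1+5) := by ring
          have h3 : 7 * w ^ (r+1+5) ≤ 7 * (L i).ncard :=
            Nat.mul_le_mul_left _ (hsize i).1
          omega)
      -- pick z ∈ L j adjacent to u and all of SB
      have huSB : u ∉ SB := fun h => hMnotL J u (hSB_MJ u h) i huLi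
      obtain ⟨z, hzLj, hzadj⟩ := exists_adj_all G (L j) (insert u SB)
        (fun x => if x = u then 7 * w ^ (r+1+3) else w ^ (r+3))
        (by
          intro x hx
          rcases Finset.mem_insert.mp hx with rfl | hx'
          · rw [if_pos rfl]
            exact Nat.mul_le_mul_left 7 (hcross i j hij x huLi)
          · have hxu : x ≠ u := fun h => huSB (by rw [← h]; exact hx')
            rw [if_neg hxu]
            exact hfew J x (hSB_MJ x hx') j hjJ)
        (by
          rw [Finset.sum_insert huSB]
          rw [if_pos rfl]
          have hconst : ∑ x ∈ SB, (if x = u then 7 * w ^ (r+1+3) else w ^ (r+3))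
              = (r+1) * w ^ (r+3) := by
            rw [Finset.sum_congr rfl (fun x hx => if_neg
                (fun h => huSB (by rw [← h]; exact hx))),
              Finset.sum_const, hSBcard, smul_eq_mul]
          rw [hconst]
          have h1 : 7 * w ^ (r+1+3) + (r+1) * w ^ (r+3) = (7 * w + (r+1)) * w ^ (r+3) := by
            ring
          have h2 : (7 * w + (r+1)) * w ^ (r+3) < (7 * w ^ 3) * w ^ (r+3) :=
            (Nat.mul_lt_mul_right (by positivity)).mpr (by omega)
          have h3 : (7 * w ^ 3) * w ^ (r+3) = 7 * w ^ (r+1+5) := by ring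
          have h4 : 7 * w ^ (r+1+5) ≤ 7 * (L j).ncard :=
            Nat.mul_le_mul_left _ (hsize j).1
          omega)
      have hzu : G.Adj u z := hzadj u (Finset.mem_insert_self u SB)
      exact no_doubleStar_embed G (r+1) hfree u z SA SB hzu hSAcard hSBcard
        (fun p hp => (huadj p hp).symm)
        (fun q hq => (hzadj q (Finset.mem_insert_of_mem hq)).symm)
        (fun p hp hadj => hnoadj I p (hSA_MI p hp) j hjI z hzLj hadj.symm)
        (fun q hq hadj => hnoadj J q (hSB_MJ q hq) i hiJ u huLi hadj.symm)
        hSAst (fun q hq q' hq' hne => hT₂st q (hSBsub hq) q' (hSBsub hq') hne)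
        (fun p hp q hq => (Finset.mem_filter.mp (hSAsub hp)).2 q (hSBsub hq))
        (fun h => hMnotL I u (hSA_MI u h) i huLi)
        (fun h => hMnotL J u (hSB_MJ u h) i huLi)
        (fun h => hMnotL I z (hSA_MI z h) j hzLj)
        (fun h => hMnotL J z (hSB_MJ z h) j hzLj)
        (by
          rw [Finset.disjoint_left]
          intro a ha ha'
          exact hMdisj I J hIJ a (hSA_MI a ha) (hSB_MJ a ha'))
    · push_neg at hb1
      by_cases hb2 : ∃ y ∈ T₂, (w + r).choose w ≤ (AF.filter (fun a => G.Adj y a)).card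
      · -- case 2a
        obtain ⟨y, hyT₂, hycard⟩ := hb2
        have hyMJ : y ∈ M J := (hBFmem y).mp (hT₂B hyT₂)
        obtain ⟨T₄, hT₄sub, hT₄card, hT₄st⟩ := stable_of_card G r _ hycard
        have hT₄MI : ∀ p ∈ T₄, p ∈ M I := fun p hp =>
          (hAFmem p).mp (Finset.mem_of_mem_filter p (hT₄sub hp))
        have hT₄adj : ∀ p ∈ T₄, G.Adj y p := fun p hp =>
          (Finset.mem_filter.mp (hT₄sub hp)).2
        obtain ⟨u, huLj, huadj⟩ := exists_adj_all G (L j) {y} (fun _ => w ^ (r+3))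
          (by
            intro x hx
            rw [Finset.mem_singleton] at hx
            subst hx
            simpa using hfew J x hyMJ j hjJ)
          (by
            rw [Finset.sum_singleton]
            have h1 : w ^ (r+3) < (7 * w ^ 3) * w ^ (r+3) := by
              have h5 : 1 ≤ w ^ 3 := Nat.one_le_pow _ _ (by omega)
              have : 1 * w ^ (r+3) < (7 * w ^ 3) * w ^ (r+3) :=
                (Nat.mul_lt_mul_right (by positivity)).mpr (by omega)
              omega
            have h2 : (7 * w ^ 3) * w ^ (r+3) = 7 * w ^ (r+1+5) := by ring
            have h3 : 7 * w ^ (r+1+5) ≤ 7 * (L j).ncard :=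
              Nat.mul_le_mul_left _ (hsize j).1
            omega)
        have hyu : G.Adj y u := huadj y (Finset.mem_singleton_self y)
        set LtF := (Set.toFinite (L t)).toFinset with hLtF
        set CF := LtF.filter (fun x => G.Adj u x) with hCFdef
        have hsplit : CF.card + (LtF.filter (fun x => ¬ G.Adj u x)).card = LtF.card := by
          rw [hCFdef]
          exact Finset.card_filter_add_card_filter_not (fun x => G.Adj u x)
        have hnonc : (LtF.filter (fun x => ¬ G.Adj u x)).card
            = ({x ∈ L t | ¬ G.Adj u x}).ncard := by
          rw [Set.ncard_eq_toFinset_card _ (Set.toFinite _)]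
          congr 1
          ext x
          constructor
          · intro hx
            rw [Finset.mem_filter] at hx
            exact (Set.Finite.mem_toFinset _).mpr
              ⟨(Set.Finite.mem_toFinset _).mp hx.1, hx.2⟩
          · intro hx
            have hx' := (Set.Finite.mem_toFinset _).mp hx
            exact Finset.mem_filter.mpr ⟨(Set.Finite.mem_toFinset _).mpr hx'.1, hx'.2⟩
        have hLtcard : LtF.card = (L t).ncard :=
          (Set.ncard_eq_toFinset_card _ (Set.toFinite (L t))).symm
        have hcross' : ({x ∈ L t | ¬ G.Adj u x}).ncard ≤ w ^ (r+1+3) :=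
          hcross j t (Ne.symm htj) u huLj
        have hCFcard : (w + r).choose w ≤ CF.card := by
          have h1 : w ^ (r+1) + w ^ (r+1+3) ≤ w ^ (r+1+5) := by
            have e1 : w ^ (r+1+5) = w ^ (r+1+3) * w ^ 2 := by ring
            have e2 : w ^ (r+1+3) * 4 ≤ w ^ (r+1+3) * w ^ 2 :=
              Nat.mul_le_mul_left _ (by nlinarith [hw2])
            have e3 : w ^ (r+1) ≤ w ^ (r+1+3) := Nat.pow_le_pow_right (by omega) (by omega)
            omega
          have h2 := (hsize t).1
          omega
        obtain ⟨X, hXsub, hXcard, hXst⟩ := stable_of_card G r CF hCFcard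
        have hXLt : ∀ q ∈ X, q ∈ L t := fun q hq =>
          (Set.Finite.mem_toFinset _).mp (Finset.mem_of_mem_filter q (hXsub hq))
        have hXadj : ∀ q ∈ X, G.Adj u q := fun q hq =>
          (Finset.mem_filter.mp (hXsub hq)).2
        exact no_doubleStar_embed G (r+1) hfree y u T₄ X hyu hT₄card hXcard
          hT₄adj hXadj
          (fun p hp hadj => hnoadj I p (hT₄MI p hp) j hjI u huLj hadj.symm)
          (fun q hq => hnoadj J y hyMJ t htJ q (hXLt q hq))
          hT₄st hXst
          (fun p hp q hq => hnoadj I p (hT₄MI p hp) t htI q (hXLt q hq))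
          (fun h => hMdisj I J hIJ y (hT₄MI y h) hyMJ)
          (fun h => hMnotL J y hyMJ t (hXLt y h))
          (fun h => hMnotL I u (hT₄MI u h) j huLj)
          (fun h => (Set.disjoint_left.mp (hdisjL (Ne.symm htj)) huLj) (hXLt u h))
          (by
            rw [Finset.disjoint_left]
            intro a ha ha'
            exact hMnotL I a (hT₄MI a ha) t (hXLt a ha'))
      · -- case 2b
        push_neg at hb2
        have hcover : AF ⊆ AnotN ∪ T₂.biUnion (fun y => AF.filter (fun a => G.Adj y a)) := by
          intro a ha
          by_cases h : ∀ y ∈ T₂, ¬ G.Adj a y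
          · exact Finset.mem_union_left _ (Finset.mem_filter.mpr ⟨ha, h⟩)
          · push_neg at h
            obtain ⟨y, hy, hadj⟩ := h
            exact Finset.mem_union_right _
              (Finset.mem_biUnion.mpr ⟨y, hy, Finset.mem_filter.mpr ⟨ha, hadj.symm⟩⟩)
        have hDpos : 1 ≤ (w + r).choose w := Nat.choose_pos (by omega)
        obtain ⟨d, hd⟩ : ∃ d, (w + r).choose w = d + 1 := ⟨(w + r).choose w - 1, by omega⟩
        have hsumle : (T₂.biUnion (fun y => AF.filter (fun a => G.Adj y a))).card
            ≤ (r+2) * d := by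
          calc (T₂.biUnion (fun y => AF.filter (fun a => G.Adj y a))).card
              ≤ ∑ y ∈ T₂, (AF.filter (fun a => G.Adj y a)).card := Finset.card_biUnion_le
            _ ≤ ∑ _y ∈ T₂, d := Finset.sum_le_sum (fun y hy => by
                have := hb2 y hy; omega)
            _ = (r+2) * d := by rw [Finset.sum_const, hT₂card, smul_eq_mul]
        have hAnotNle : AnotN.card ≤ d := by omega
        have hAFle : AF.card ≤ d + (r+2) * d := by
          calc AF.card ≤ (AnotN ∪ T₂.biUnion (fun y => AF.filter (fun a => G.Adj y a))).card :=
                Finset.card_le_card hcover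
            _ ≤ AnotN.card + (T₂.biUnion (fun y => AF.filter (fun a => G.Adj y a))).card :=
                Finset.card_union_le _ _
            _ ≤ d + (r+2) * d := Nat.add_le_add hAnotNle hsumle
        have e1 : d + (r+2) * d = (r+3) * d := by ring
        have e2 : (r+3) * (d+1) = (r+3) * d + (r+3) := by ring
        have h3 : AF.card ≤ (r+3) * d := by rw [← e1]; exact hAFle
        have h4 : (r+3) * d + (r+3) ≤ m := by
          rw [← e2, ← hd]
          exact le_trans hDD3 hmm
        omega
  -- the laminar counting argument
  have hcompl2 : ∀ I : Set (Fin k), m < (templatePart G (r+1) L0 L I).ncard →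
      ∃ i₁ i₂ : Fin k, i₁ ≠ i₂ ∧ i₁ ∉ I ∧ i₂ ∉ I := by
    intro I hI
    have hne : (M I).Nonempty := by
      apply Set.nonempty_of_ncard_ne_zero
      have : m < (M I).ncard := hI
      omega
    obtain ⟨v, hv⟩ := hne
    obtain ⟨i₁, i₂, hne12, h1, h2⟩ := hv.2.1.1
    refine ⟨i₁, i₂, hne12, ?_, ?_⟩
    · intro hmem
      obtain ⟨u, hu, ha⟩ := (hv.2.2 i₁).mpr hmem
      exact h1 u hu ha
    · intro hmem
      obtain ⟨u, hu, ha⟩ := (hv.2.2 i₂).mpr hmem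
      exact h2 u hu ha
  have trichotomy : ∀ I : Set (Fin k), m < (templatePart G (r+1) L0 L I).ncard →
      ∀ J : Set (Fin k), m < (templatePart G (r+1) L0 L J).ncard →
      I ⊆ J ∨ J ⊆ I ∨ Iᶜ ∩ Jᶜ = ∅ := by
    intro I hI J hJ
    by_contra hcon
    push_neg at hcon
    obtain ⟨hIJ', hJI', hne⟩ := hcon
    obtain ⟨i, hiI, hiJ⟩ := Set.not_subset.mp hIJ'
    obtain ⟨j, hjJ, hjI⟩ := Set.not_subset.mp hJI'
    obtain ⟨t, ht1, ht2⟩ := hne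
    have htI' : t ∉ I := ht1
    have htJ' : t ∉ J := ht2
    exact key I J i j t hiI hiJ hjJ hjI htI' htJ' hI hJ
  set Large := {I : Set (Fin k) | m < (templatePart G (r+1) L0 L I).ncard} with hLargeDef
  have hLargeMem : ∀ I : Set (Fin k), I ∈ Large ↔ m < (templatePart G (r+1) L0 L I).ncard :=
    fun I => Iff.rfl
  set FL := ((Set.toFinite Large).toFinset).image
    (fun I : Set (Fin k) => (Set.toFinite Iᶜ).toFinset) with hFLdef
  have hinj : Set.InjOn (fun I : Set (Fin k) => (Set.toFinite Iᶜ).toFinset)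
      ((Set.toFinite Large).toFinset : Set (Set (Fin k))) := by
    intro I _ J _ h
    simp only at h
    have h2 : Iᶜ = Jᶜ := Set.Finite.toFinset_inj.mp h
    exact compl_injective h2
  have hFLcard : FL.card = Large.ncard := by
    rw [hFLdef, Finset.card_image_of_injOn hinj,
      ← Set.ncard_eq_toFinset_card _ (Set.toFinite Large)]
  have hlam := laminar_bound FL.card FL Finset.univ rfl
    (fun C _ => Finset.subset_univ C)
    (by
      intro C hC
      obtain ⟨I, hIm, rfl⟩ := Finset.mem_image.mp hC
      have hIL : I ∈ Large := (Set.Finite.mem_toFinset _).mp hIm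
      obtain ⟨i₁, i₂, hne12, h1, h2⟩ := hcompl2 I hIL
      rw [Nat.succ_le_iff]
      apply Finset.one_lt_card.mpr
      exact ⟨i₁, (Set.Finite.mem_toFinset _).mpr h1, i₂,
        (Set.Finite.mem_toFinset _).mpr h2, hne12⟩)
    (by
      intro C hC D hD
      obtain ⟨I, hIm, rfl⟩ := Finset.mem_image.mp hC
      obtain ⟨J, hJm, rfl⟩ := Finset.mem_image.mp hD
      have hIL : I ∈ Large := (Set.Finite.mem_toFinset _).mp hIm
      have hJL : J ∈ Large := (Set.Finite.mem_toFinset _).mp hJm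
      rcases trichotomy I hIL J hJL with h | h | h
      · exact Or.inr (Or.inl (Set.Finite.toFinset_subset_toFinset.mpr
          (Set.compl_subset_compl.mpr h)))
      · exact Or.inl (Set.Finite.toFinset_subset_toFinset.mpr
          (Set.compl_subset_compl.mpr h))
      · refine Or.inr (Or.inr (Finset.disjoint_left.mpr ?_))
        intro x hx hx'
        have h1 : x ∈ Iᶜ := (Set.Finite.mem_toFinset _).mp hx
        have h2 : x ∈ Jᶜ := (Set.Finite.mem_toFinset _).mp hx'
        have : x ∈ Iᶜ ∩ Jᶜ := ⟨h1, h2⟩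
        rw [h] at this
        exact this)
  rw [Finset.card_univ, Fintype.card_fin] at hlam
  omega
end
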